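/- Let f : ℝ → ℝ be continuous and bounded, and define u(x, t) = (4πt)^{-1/2} ∫_ℝ f(y) exp(-(y - x)²/(4t)) dy for t > 0. Then u is infinitely differentiable on ℝ × (0, ∞), u satisfies the heat equation ∂u/∂t = ∂²u/∂x² for all x ∈ ℝ and t > 0, and for every x ∈ ℝ one has u(x, t) → f(x) as t → 0⁺. -/

import Mathlib

/-! Write `u = (4πt)^{-1/2} V₀`, where `V_k(x, t) = ∫ f(y) (y - x)^k e^{-(y - x)²/4t} dy`.
Near any point with `t > 0` the integrands are dominated by a fixed integrable Gaussian, so one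
may differentiate under the integral sign:
`∂ₓ V_k = -k V_{k-1} + V_{k+1}/(2t)` and `∂ₜ V_k = V_{k+2}/(4t²)`.
The right-hand sides are again moments, so induction on the order gives `C^∞`, and the cases
`k = 0, 1` give `∂ₜ u = ∂ₓ² u`. The substitution `y = x + 2√t z` turns `u(x, t)` into
`π^{-1/2} ∫ f(x + 2√t z) e^{-z²} dz`, which tends to `f(x)` by dominated convergence. -/

open MeasureTheory Filter Real Set ContinuousLinearMap Topology

namespace HeatEquation

noncomputable def gaussMonomial (k : ℕ) (p : ℝ × ℝ) (y : ℝ) : ℝ :=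
  (y - p.1) ^ k * exp (-(y - p.1) ^ 2 / (4 * p.2))

noncomputable def heatMoment (f : ℝ → ℝ) (k : ℕ) (p : ℝ × ℝ) : ℝ :=
  ∫ y, f y * gaussMonomial k p y

noncomputable def heatSolution (f : ℝ → ℝ) (x t : ℝ) : ℝ :=
  (√(4 * π * t))⁻¹ * heatMoment f 0 (x, t)

lemma norm_smul_le_abs_of_norm_le_one {E : Type*} [SeminormedAddCommGroup E] [NormedSpace ℝ E]
    {L : E} (hL : ‖L‖ ≤ 1) (a : ℝ) : ‖a • L‖ ≤ |a| := by
  rw [norm_smul, Real.norm_eq_abs]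
  exact mul_le_of_le_one_right (abs_nonneg a) hL

/-- The common form of the derivatives of `gaussMonomial · · y` and of `heatMoment f`.
At `k = 0` the truncated `k - 1` is harmless, since its coefficient vanishes. -/
noncomputable def momentFDeriv (M : ℕ → ℝ × ℝ → ℝ) (k : ℕ) (p : ℝ × ℝ) : ℝ × ℝ →L[ℝ] ℝ :=
  (-(k : ℝ) * M (k - 1) p + (2 * p.2)⁻¹ * M (k + 1) p) • fst ℝ ℝ ℝ +
    ((4 * p.2 ^ 2)⁻¹ * M (k + 2) p) • snd ℝ ℝ ℝ

section momentFDeriv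

variable {M : ℕ → ℝ × ℝ → ℝ} {k : ℕ} {p : ℝ × ℝ}

lemma momentFDeriv_apply (v : ℝ × ℝ) :
    momentFDeriv M k p v = (-(k : ℝ) * M (k - 1) p + (2 * p.2)⁻¹ * M (k + 1) p) * v.1 +
      (4 * p.2 ^ 2)⁻¹ * M (k + 2) p * v.2 := by
  simp [momentFDeriv]

lemma smul_momentFDeriv (c : ℝ) :
    c • momentFDeriv M k p = momentFDeriv (fun j q => c * M j q) k p := by
  refine ContinuousLinearMap.ext fun v => ?_
  simp only [smul_apply, momentFDeriv_apply, smul_eq_mul]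
  ring

lemma norm_momentFDeriv_le {q : ℝ × ℝ} {B : ℝ} (hp : 0 < p.2) (hq : p.2 / 2 ≤ q.2)
    (hM : ∀ j ≤ k + 2, |M j q| ≤ B) :
    ‖momentFDeriv M k q‖ ≤ (k + p.2⁻¹ + (p.2 ^ 2)⁻¹) * B := by
  have hB : 0 ≤ B := (abs_nonneg _).trans (hM 0 (Nat.zero_le _))
  have hq₀ : 0 < q.2 := by linarith
  have h2q : (2 * q.2)⁻¹ ≤ p.2⁻¹ := inv_anti₀ hp (by linarith)
  have h4q : (4 * q.2 ^ 2)⁻¹ ≤ (p.2 ^ 2)⁻¹ := inv_anti₀ (by positivity) (by nlinarith)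
  have hfst : ‖(-(k : ℝ) * M (k - 1) q + (2 * q.2)⁻¹ * M (k + 1) q) • fst ℝ ℝ ℝ‖ ≤
      k * B + p.2⁻¹ * B := by
    refine (norm_smul_le_abs_of_norm_le_one (L := fst ℝ ℝ ℝ) (norm_fst_le ..) _).trans <|
      (abs_add_le _ _).trans (add_le_add ?_ ?_) <;> rw [abs_mul]
    · rw [abs_neg, Nat.abs_cast]
      exact mul_le_mul_of_nonneg_left (hM _ (by omega)) k.cast_nonneg
    · rw [abs_of_pos (by positivity)]
      exact mul_le_mul h2q (hM _ (by omega)) (abs_nonneg _) (by positivity)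
  have hsnd : ‖((4 * q.2 ^ 2)⁻¹ * M (k + 2) q) • snd ℝ ℝ ℝ‖ ≤ (p.2 ^ 2)⁻¹ * B := by
    refine (norm_smul_le_abs_of_norm_le_one (L := snd ℝ ℝ ℝ) (norm_snd_le ..) _).trans ?_
    rw [abs_mul, abs_of_pos (by positivity)]
    exact mul_le_mul h4q (hM _ le_rfl) (abs_nonneg _) (by positivity)
  calc ‖momentFDeriv M k q‖ ≤ k * B + p.2⁻¹ * B + (p.2 ^ 2)⁻¹ * B :=
        (norm_add_le _ _).trans (add_le_add hfst hsnd)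
    _ = (k + p.2⁻¹ + (p.2 ^ 2)⁻¹) * B := by ring

lemma integral_momentFDeriv {α : Type*} [MeasurableSpace α] {μ : Measure α}
    {M : α → ℕ → ℝ × ℝ → ℝ} (hM : ∀ j, Integrable (fun a => M a j p) μ) :
    ∫ a, momentFDeriv (M a) k p ∂μ = momentFDeriv (fun j q => ∫ a, M a j q ∂μ) k p := by
  have hfst : Integrable (fun a => -(k : ℝ) * M a (k - 1) p + (2 * p.2)⁻¹ * M a (k + 1) p) μ :=
    ((hM _).const_mul _).add ((hM _).const_mul _)
  have hsnd : Integrable (fun a => (4 * p.2 ^ 2)⁻¹ * M a (k + 2) p) μ := (hM _).const_mul _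
  simp only [momentFDeriv]
  rw [integral_add (hfst.smul_const _) (hsnd.smul_const _), integral_smul_const,
    integral_smul_const, integral_add ((hM _).const_mul _) ((hM _).const_mul _),
    integral_const_mul, integral_const_mul, integral_const_mul]

lemma contDiffOn_momentFDeriv {s : Set (ℝ × ℝ)} {n : WithTop ℕ∞} (hs : ∀ p ∈ s, p.2 ≠ 0)
    (hM : ∀ j, ContDiffOn ℝ n (M j) s) : ContDiffOn ℝ n (momentFDeriv M k) s := by
  have hinv : ∀ c : ℝ, c ≠ 0 → ∀ m : ℕ, ContDiffOn ℝ n (fun q : ℝ × ℝ => (c * q.2 ^ m)⁻¹) s :=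
    fun c hc m => (contDiffOn_const.mul (contDiffOn_snd.pow m)).inv fun q hq =>
      mul_ne_zero hc (pow_ne_zero m (hs q hq))
  refine ((contDiffOn_const.mul (hM _)).add ?_).smul contDiffOn_const |>.add
    (((hinv 4 four_ne_zero 2).mul (hM _)).smul contDiffOn_const)
  simpa using (hinv 2 two_ne_zero 1).mul (hM (k + 1))

end momentFDeriv

lemma integrable_exp_mul_abs_sub_sub_mul_sq (a x₀ : ℝ) {c : ℝ} (hc : 0 < c) :
    Integrable fun z : ℝ => exp (a * |z - x₀| - c * (z - x₀) ^ 2) := by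
  refine ((((integrable_exp_neg_mul_sq (half_pos hc)).comp_sub_right x₀).const_mul
    (exp (a ^ 2 / (2 * c)))).mono' (by fun_prop) (.of_forall fun z => ?_))
  rw [Real.norm_eq_abs, abs_exp, ← exp_add, exp_le_exp]
  -- completing the square: `a w ≤ a² / 2c + (c / 2) w²`
  have h : a * |z - x₀| ≤ a ^ 2 / (2 * c) + c / 2 * (z - x₀) ^ 2 := by
    have : 2 * c * (a * |z - x₀|) ≤ 2 * c * (a ^ 2 / (2 * c) + c / 2 * (z - x₀) ^ 2) := by
      rw [mul_add, mul_div_cancel₀ _ (by positivity)]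
      ring_nf
      nlinarith [sq_nonneg (a - c * |z - x₀|), sq_abs (z - x₀)]
    exact le_of_mul_le_mul_left this (by positivity)
  linarith

lemma abs_gaussMonomial_le {m N : ℕ} (hm : m ≤ N) {p q : ℝ × ℝ} (hp : 0 < p.2)
    (h₁ : |q.1 - p.1| ≤ 1) (h₂ : 0 < q.2) (h₃ : q.2 ≤ 3 * p.2 / 2) (y : ℝ) :
    |gaussMonomial m q y| ≤
      exp (N + 1 / (6 * p.2)) * exp (N * |y - p.1| - (12 * p.2)⁻¹ * (y - p.1) ^ 2) := by
  have hpow : |y - q.1| ^ m ≤ exp (N * (1 + |y - p.1|)) := by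
    have hdist : |y - q.1| ≤ exp (1 + |y - p.1|) := by
      linarith [abs_sub_le y p.1 q.1, abs_sub_comm p.1 q.1, add_one_le_exp (1 + |y - p.1|)]
    calc |y - q.1| ^ m ≤ exp (1 + |y - p.1|) ^ m := pow_le_pow_left₀ (abs_nonneg _) hdist m
      _ ≤ exp (1 + |y - p.1|) ^ N := pow_le_pow_right₀ (one_le_exp (by positivity)) hm
      _ = exp (N * (1 + |y - p.1|)) := by rw [← exp_nat_mul]
  have hgauss : -(y - q.1) ^ 2 / (4 * q.2) ≤ 1 / (6 * p.2) - (12 * p.2)⁻¹ * (y - p.1) ^ 2 := by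
    have hd : (q.1 - p.1) ^ 2 ≤ 1 := by
      rw [← sq_abs]
      exact pow_le_one₀ (abs_nonneg _) h₁
    have hsq : (y - p.1) ^ 2 ≤ 2 * (y - q.1) ^ 2 + 2 := by
      nlinarith [sq_nonneg (y - 2 * q.1 + p.1)]
    calc -(y - q.1) ^ 2 / (4 * q.2) ≤ (2 - (y - p.1) ^ 2) / (12 * p.2) := by
          rw [div_le_div_iff₀ (by positivity) (by positivity)]
          nlinarith [mul_le_mul_of_nonneg_left hsq h₂.le,
            mul_nonneg (by linarith : (0 : ℝ) ≤ 12 * p.2 - 8 * q.2) (sq_nonneg (y - q.1))]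
      _ = _ := by field_simp; ring
  calc |gaussMonomial m q y| = |y - q.1| ^ m * exp (-(y - q.1) ^ 2 / (4 * q.2)) := by
        rw [gaussMonomial, abs_mul, abs_pow, abs_exp]
    _ ≤ exp (N * (1 + |y - p.1|)) * exp (1 / (6 * p.2) - (12 * p.2)⁻¹ * (y - p.1) ^ 2) :=
        mul_le_mul hpow (exp_le_exp.2 hgauss) (exp_nonneg _) (exp_nonneg _)
    _ = _ := by rw [← exp_add, ← exp_add]; ring_nf

lemma hasFDerivAt_gaussMonomial (k : ℕ) (y : ℝ) {p : ℝ × ℝ} (hp : p.2 ≠ 0) :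
    HasFDerivAt (fun q => gaussMonomial k q y)
      (momentFDeriv (fun j q => gaussMonomial j q y) k p) p := by
  have hdiff : HasFDerivAt (fun q : ℝ × ℝ => y - q.1) (-fst ℝ ℝ ℝ) p :=
    hasFDerivAt_fst.const_sub y
  have hinv := (hasDerivAt_inv (by positivity : 4 * p.2 ≠ 0)).comp_hasFDerivAt p
    ((hasFDerivAt_snd (𝕜 := ℝ) (E := ℝ) (F := ℝ) (p := p)).const_mul 4)
  refine ((hdiff.pow k).fun_mul ((hdiff.pow 2).fun_neg.fun_mul hinv).exp).congr_fderiv ?_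
  refine ContinuousLinearMap.ext fun v => ?_
  simp only [momentFDeriv_apply, gaussMonomial, add_apply, smul_apply, neg_apply, coe_fst',
    coe_snd', smul_eq_mul, Function.comp_apply, div_eq_mul_inv, nsmul_eq_mul]
  field_simp
  ring

section heatMoment

variable {f : ℝ → ℝ} {C : ℝ}

lemma abs_mul_gaussMonomial_le (hC : ∀ y, |f y| ≤ C) {m N : ℕ} (hm : m ≤ N) {p q : ℝ × ℝ}
    (hp : 0 < p.2) (h₁ : |q.1 - p.1| ≤ 1) (h₂ : 0 < q.2) (h₃ : q.2 ≤ 3 * p.2 / 2) (y : ℝ) :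
    |f y * gaussMonomial m q y| ≤ C * exp (N + 1 / (6 * p.2)) *
      exp (N * |y - p.1| - (12 * p.2)⁻¹ * (y - p.1) ^ 2) := by
  rw [abs_mul, mul_assoc]
  exact mul_le_mul (hC y) (abs_gaussMonomial_le hm hp h₁ h₂ h₃ y) (abs_nonneg _)
    ((abs_nonneg _).trans (hC y))

lemma integrable_mul_gaussMonomial (hf : AEStronglyMeasurable f volume) (hC : ∀ y, |f y| ≤ C)
    (k : ℕ) {p : ℝ × ℝ} (hp : 0 < p.2) :
    Integrable fun y => f y * gaussMonomial k p y :=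
  ((integrable_exp_mul_abs_sub_sub_mul_sq k p.1 (by positivity)).const_mul _).mono'
    (hf.mul (by unfold gaussMonomial; fun_prop)) <| .of_forall fun y =>
      abs_mul_gaussMonomial_le hC le_rfl hp (by simp) hp (by linarith) y

lemma hasFDerivAt_heatMoment (hf : AEStronglyMeasurable f volume) (hC : ∀ y, |f y| ≤ C)
    (k : ℕ) {p : ℝ × ℝ} (hp : 0 < p.2) :
    HasFDerivAt (heatMoment f k) (momentFDeriv (heatMoment f) k p) p := by
  set U := Icc (p.1 - 1) (p.1 + 1) ×ˢ Icc (p.2 / 2) (3 * p.2 / 2)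
  have hU : U ∈ 𝓝 p := prod_mem_nhds (Icc_mem_nhds (by linarith) (by linarith))
    (Icc_mem_nhds (by linarith) (by linarith))
  have hF' : ∀ q y, f y • momentFDeriv (fun j q => gaussMonomial j q y) k q =
      momentFDeriv (fun j q => f y * gaussMonomial j q y) k q := fun q y => smul_momentFDeriv _
  have hderiv := hasFDerivAt_integral_of_dominated_of_fderiv_le (μ := volume)
    (F' := fun q y => momentFDeriv (fun j q => f y * gaussMonomial j q y) k q) hU
    (.of_forall fun q => hf.mul (by unfold gaussMonomial; fun_prop))
    (integrable_mul_gaussMonomial hf hC k hp)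
    (by
      simp_rw [← hF']
      exact hf.smul (Continuous.aestronglyMeasurable (by
        simp only [momentFDeriv, gaussMonomial]; fun_prop)))
    (.of_forall fun y q ⟨⟨hq₁, hq₁'⟩, ⟨hq₂, hq₂'⟩⟩ => norm_momentFDeriv_le hp hq₂ fun j hj =>
      abs_mul_gaussMonomial_le hC hj hp (abs_sub_le_iff.2 ⟨by linarith, by linarith⟩)
        (by linarith) hq₂' y)
    (((integrable_exp_mul_abs_sub_sub_mul_sq (k + 2 : ℕ) p.1
      (by positivity : 0 < (12 * p.2)⁻¹)).const_mul _).const_mul _)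
    (.of_forall fun y q hq => by
      rw [← hF']
      exact (hasFDerivAt_gaussMonomial k y (by linarith [hq.2.1])).const_mul (f y))
  rwa [integral_momentFDeriv fun j => integrable_mul_gaussMonomial hf hC j hp] at hderiv

lemma contDiffOn_heatMoment (hf : AEStronglyMeasurable f volume) (hC : ∀ y, |f y| ≤ C)
    (n : ℕ) : ∀ k, ContDiffOn ℝ n (heatMoment f k) (univ ×ˢ Ioi 0) := by
  induction n with
  | zero =>
    exact fun k => contDiffOn_zero.2 fun p hp =>
      (hasFDerivAt_heatMoment hf hC k hp.2).continuousAt.continuousWithinAt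
  | succ n ih =>
    intro k
    rw [Nat.cast_succ, contDiffOn_succ_iff_fderiv_of_isOpen (isOpen_univ.prod isOpen_Ioi)]
    refine ⟨fun p hp =>
      (hasFDerivAt_heatMoment hf hC k hp.2).differentiableAt.differentiableWithinAt, by simp, ?_⟩
    exact (contDiffOn_momentFDeriv (fun p hp => hp.2.ne') ih).congr fun p hp =>
      (hasFDerivAt_heatMoment hf hC k hp.2).fderiv

lemma hasDerivAt_heatMoment_fst (hf : AEStronglyMeasurable f volume) (hC : ∀ y, |f y| ≤ C)
    (k : ℕ) (x : ℝ) {t : ℝ} (ht : 0 < t) :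
    HasDerivAt (fun z => heatMoment f k (z, t))
      (-(k : ℝ) * heatMoment f (k - 1) (x, t) + (2 * t)⁻¹ * heatMoment f (k + 1) (x, t)) x := by
  have h := (hasFDerivAt_heatMoment hf hC k (p := (x, t)) ht).comp_hasDerivAt x
    ((hasDerivAt_id x).prodMk (hasDerivAt_const x t))
  exact h.congr_deriv (by simp [momentFDeriv_apply])

lemma hasDerivAt_heatMoment_snd (hf : AEStronglyMeasurable f volume) (hC : ∀ y, |f y| ≤ C)
    (k : ℕ) (x : ℝ) {t : ℝ} (ht : 0 < t) :
    HasDerivAt (fun s => heatMoment f k (x, s))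
      ((4 * t ^ 2)⁻¹ * heatMoment f (k + 2) (x, t)) t := by
  have h := (hasFDerivAt_heatMoment hf hC k (p := (x, t)) ht).comp_hasDerivAt t
    ((hasDerivAt_const t x).prodMk (hasDerivAt_id t))
  exact h.congr_deriv (by simp [momentFDeriv_apply])

end heatMoment

lemma heatMoment_zero (f : ℝ → ℝ) (p : ℝ × ℝ) :
    heatMoment f 0 p = ∫ y, f y * exp (-(y - p.1) ^ 2 / (4 * p.2)) := by
  simp [heatMoment, gaussMonomial]

lemma hasDerivAt_inv_sqrt_four_pi_mul {t : ℝ} (ht : 0 < t) :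
    HasDerivAt (fun s => (√(4 * π * s))⁻¹) (-(√(4 * π * t))⁻¹ / (2 * t)) t := by
  have hpos : 0 < 4 * π * t := by positivity
  have hlin : HasDerivAt (fun s => 4 * π * s) (4 * π) t := by
    simpa using (hasDerivAt_id t).const_mul (4 * π)
  refine ((hlin.sqrt hpos.ne').fun_inv (sqrt_pos.2 hpos).ne').congr_deriv ?_
  rw [sq_sqrt hpos.le]
  field_simp

section heatSolution

variable {f : ℝ → ℝ} {C : ℝ}

lemma contDiffOn_heatSolution (hf : AEStronglyMeasurable f volume) (hC : ∀ y, |f y| ≤ C) :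
    ContDiffOn ℝ (⊤ : ℕ∞) (fun p : ℝ × ℝ => heatSolution f p.1 p.2) (univ ×ˢ Ioi 0) := by
  have hpos : ∀ p ∈ (univ : Set ℝ) ×ˢ Ioi 0, 0 < 4 * π * p.2 := fun p hp =>
    mul_pos (by positivity) hp.2
  have hsqrt : ContDiffOn ℝ (⊤ : ℕ∞) (fun p : ℝ × ℝ => (√(4 * π * p.2))⁻¹) (univ ×ˢ Ioi 0) :=
    ((contDiffOn_const.mul contDiffOn_snd).sqrt fun p hp => (hpos p hp).ne').inv
      fun p hp => (sqrt_pos.2 (hpos p hp)).ne'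
  exact hsqrt.mul (contDiffOn_infty.2 fun n => contDiffOn_heatMoment hf hC n 0)

lemma deriv_heatSolution_eq_deriv_deriv (hf : AEStronglyMeasurable f volume)
    (hC : ∀ y, |f y| ≤ C) (x : ℝ) {t : ℝ} (ht : 0 < t) :
    deriv (heatSolution f x) t = deriv (deriv fun z => heatSolution f z t) x := by
  set c := (√(4 * π * t))⁻¹
  have htime : HasDerivAt (heatSolution f x)
      (-c / (2 * t) * heatMoment f 0 (x, t) + c * ((4 * t ^ 2)⁻¹ * heatMoment f 2 (x, t))) t :=
    (hasDerivAt_inv_sqrt_four_pi_mul ht).fun_mul (hasDerivAt_heatMoment_snd hf hC 0 x ht)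
  have hspace : deriv (fun z => heatSolution f z t) =
      fun z => c * ((2 * t)⁻¹ * heatMoment f 1 (z, t)) :=
    funext fun z => ((hasDerivAt_heatMoment_fst hf hC 0 z ht).const_mul c).deriv.trans (by simp)
  rw [htime.deriv, hspace,
    (((hasDerivAt_heatMoment_fst hf hC 1 x ht).const_mul _).const_mul c).deriv]
  field_simp
  ring

end heatSolution

lemma integral_mul_exp_neg_sq_div_eq (f : ℝ → ℝ) (x : ℝ) {t : ℝ} (ht : 0 < t) :
    ∫ y, f y * exp (-(y - x) ^ 2 / (4 * t)) =
      2 * √t * ∫ z, f (x + 2 * √t * z) * exp (-z ^ 2) := by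
  have hs : 0 < 2 * √t := by positivity
  have hscale := Measure.integral_comp_mul_left
    (fun w => f (x + w) * exp (-w ^ 2 / (4 * t))) (2 * √t)
  have hexp : ∀ z, -(2 * √t * z) ^ 2 / (4 * t) = -z ^ 2 := fun z => by
    rw [mul_pow, mul_pow, sq_sqrt ht.le]
    field_simp
    ring
  simp only [hexp, abs_of_pos (inv_pos.2 hs), smul_eq_mul] at hscale
  rw [hscale, mul_inv_cancel_left₀ hs.ne', ← integral_add_left_eq_self _ x]
  simp only [add_sub_cancel_left]

lemma tendsto_integral_comp_mul_mul_exp_neg_sq {f : ℝ → ℝ} {x C : ℝ} (hf : Measurable f)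
    (hfx : ContinuousAt f x) (hC : ∀ y, |f y| ≤ C) :
    Tendsto (fun s => ∫ z, f (x + s * z) * exp (-z ^ 2)) (𝓝 0) (𝓝 (√π * f x)) := by
  have hlim : ∫ z, f x * exp (-z ^ 2) = √π * f x := by
    rw [integral_const_mul, mul_comm]
    simpa using congrArg (f x * ·) (integral_gaussian 1)
  rw [← hlim]
  refine tendsto_integral_filter_of_dominated_convergence (fun z => C * exp (-z ^ 2))
    (.of_forall fun s => ((hf.comp (by fun_prop)).mul (by fun_prop)).aestronglyMeasurable)
    (.of_forall fun s => .of_forall fun z => ?_)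
    (by simpa using (integrable_exp_neg_mul_sq one_pos).const_mul C)
    (.of_forall fun z => ?_)
  · rw [Real.norm_eq_abs, abs_mul, abs_exp]
    exact mul_le_mul_of_nonneg_right (hC _) (exp_nonneg _)
  · have harg : Tendsto (fun s : ℝ => x + s * z) (𝓝 0) (𝓝 x) :=
      Continuous.tendsto' (by fun_prop) 0 x (by simp)
    exact (hfx.tendsto.comp harg).mul_const _

lemma tendsto_heatSolution {f : ℝ → ℝ} {x C : ℝ} (hf : Measurable f) (hfx : ContinuousAt f x)
    (hC : ∀ y, |f y| ≤ C) : Tendsto (heatSolution f x) (𝓝[>] 0) (𝓝 (f x)) := by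
  have hscale : Tendsto (fun t => 2 * √t) (𝓝[>] 0) (𝓝 0) :=
    (Continuous.tendsto' (by fun_prop) 0 0 (by simp)).mono_left nhdsWithin_le_nhds
  have hrescaled : ∀ t ∈ Ioi (0 : ℝ),
      (√π)⁻¹ * ∫ z, f (x + 2 * √t * z) * exp (-z ^ 2) = heatSolution f x t := by
    intro t (ht : 0 < t)
    have hsplit : 4 * π * t = (2 * √π * √t) ^ 2 := by
      rw [mul_pow, mul_pow, sq_sqrt pi_pos.le, sq_sqrt ht.le]
      ring
    rw [heatSolution, heatMoment_zero, integral_mul_exp_neg_sq_div_eq f x ht, hsplit,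
      sqrt_sq (by positivity)]
    field_simp
  have h := ((tendsto_integral_comp_mul_mul_exp_neg_sq hf hfx hC).comp hscale).const_mul (√π)⁻¹
  rw [inv_mul_cancel_left₀ (sqrt_pos.2 pi_pos).ne'] at h
  exact h.congr' (eventually_nhdsWithin_of_forall hrescaled)

end HeatEquation

open HeatEquation

/-- **Solution of the heat equation via the heat kernel.** For `f : ℝ → ℝ` continuous and
bounded, the function `u(x, t) = (4πt)^{-1/2} ∫_ℝ f(y) exp (-(y - x)² / (4t)) dy` is infinitely
differentiable on `ℝ × (0, ∞)`, satisfies the heat equation `∂u/∂t = ∂²u/∂x²` there, and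
`u(x, t) → f(x)` as `t → 0⁺` for every `x`. -/
theorem heat_equation_classical_solution
    (f : ℝ → ℝ) (hf : Continuous f) (hfb : ∃ C : ℝ, ∀ x, |f x| ≤ C)
    (u : ℝ → ℝ → ℝ)
    (hu : ∀ (x : ℝ) (t : ℝ), 0 < t →
      u x t = (Real.sqrt (4 * Real.pi * t))⁻¹ *
        ∫ y : ℝ, f y * Real.exp (-(y - x) ^ 2 / (4 * t))) :
    ContDiffOn ℝ (⊤ : ℕ∞) (fun p : ℝ × ℝ => u p.1 p.2) (Set.univ ×ˢ Set.Ioi (0 : ℝ)) ∧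
    (∀ (x : ℝ) (t : ℝ), 0 < t →
      deriv (fun s : ℝ => u x s) t = deriv (deriv fun z : ℝ => u z t) x) ∧
    (∀ x : ℝ, Tendsto (fun t : ℝ => u x t) (nhdsWithin 0 (Set.Ioi 0)) (nhds (f x))) := by
  obtain ⟨C, hC⟩ := hfb
  have hu' : ∀ x t, 0 < t → u x t = heatSolution f x t := fun x t ht => by
    rw [hu x t ht, heatSolution, heatMoment_zero]
  refine ⟨(contDiffOn_heatSolution hf.aestronglyMeasurable hC).congr
      fun p hp => hu' p.1 p.2 hp.2, fun x t ht => ?_, fun x => ?_⟩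
  · have htime : (fun s => u x s) =ᶠ[𝓝 t] heatSolution f x :=
      eventually_of_mem (Ioi_mem_nhds ht) fun s hs => hu' x s hs
    rw [htime.deriv_eq, funext fun z => hu' z t ht]
    exact deriv_heatSolution_eq_deriv_deriv hf.aestronglyMeasurable hC x ht
  · exact (tendsto_heatSolution hf.measurable hf.continuousAt hC).congr'
      (eventually_nhdsWithin_of_forall fun t ht => (hu' x t ht).symm)
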